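/- Let r be the generating function of the large Schröder numbers, satisfying r = 1 + z·r + z·r². Then the Riordan array (r, z·r²) is a pseudo-involution, i.e., z·r² is pseudo-involutory and r ∘ (-z·r²) = 1/r. -/

import Mathlib

open PowerSeries

/-- Composition `f ∘ g` of formal power series (meaningful when the constant
coefficient of `g` is zero). -/
noncomputable def comp (f g : PowerSeries ℚ) : PowerSeries ℚ :=
  PowerSeries.mk fun n =>
    ∑ i ∈ Finset.range (n + 1), (PowerSeries.coeff i f) * (PowerSeries.coeff n (g ^ i))

/-- A formal power series `f` is pseudo-involutory when its compositional
inverse is `-f(-z)`. -/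
def PseudoInvolutory (f : PowerSeries ℚ) : Prop :=
  comp f (-(comp f (-X))) = X ∧ comp (-(comp f (-X))) f = X

/-!
Every identity to be proved says that two power series solve the same equation
`y = 1 + a y + a y²` with `a(0) = 0`, whose solution is unique: the difference of two solutions
is killed by the unit `1 - a - a (y₁ + y₂)`. Composition with a series without constant term is
Mathlib's ring homomorphism `PowerSeries.subst`, so `r ∘ g` solves the equation with `a = g`,
and `s := r(-z)` solves it with `a = -z`; and whenever `u = 1 + p u + p u²`, the inverse `u⁻¹`
solves it with `a = -p u²`. Hence `r ∘ (-z r²) = r⁻¹`, `s ∘ (z r²) = r⁻¹` and `r ∘ (z s²) = s⁻¹`,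
and the last two say that `z r²` and `-(z r²)(-z) = z s²` are mutually inverse.
-/

theorem PowerSeries.coeff_pow_eq_zero_of_lt {R : Type*} [CommSemiring R] {g : R⟦X⟧}
    (hg : constantCoeff g = 0) {n d : ℕ} (h : n < d) : coeff n (g ^ d) = 0 :=
  X_pow_dvd_iff.mp (pow_dvd_pow_of_dvd (X_dvd_iff.mpr hg) d) n h

section Quadratic

variable {R : Type*} [CommRing R]

theorem PowerSeries.eq_of_eq_one_add_mul_add_mul_sq {a y₁ y₂ : R⟦X⟧}
    (ha : constantCoeff a = 0) (h₁ : y₁ = 1 + a * y₁ + a * y₁ ^ 2)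
    (h₂ : y₂ = 1 + a * y₂ + a * y₂ ^ 2) : y₁ = y₂ := by
  have hunit : IsUnit (1 - a - a * (y₁ + y₂)) := by
    simp [isUnit_iff_constantCoeff, ha]
  have hprod : (y₁ - y₂) * (1 - a - a * (y₁ + y₂)) = 0 := by
    linear_combination h₁ - h₂
  exact sub_eq_zero.mp (hunit.mul_left_eq_zero.mp hprod)

theorem eq_one_add_mul_add_mul_sq_of_mul_eq_one {p u v : R}
    (hu : u = 1 + p * u + p * u ^ 2) (huv : u * v = 1) :
    v = 1 + -(p * u ^ 2) * v + -(p * u ^ 2) * v ^ 2 := by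
  linear_combination (1 + p * u * v) * huv - v * hu

end Quadratic

section Composition

variable {g : ℚ⟦X⟧} (hg : constantCoeff g = 0)
include hg

theorem comp_eq_subst (f : ℚ⟦X⟧) : comp f g = f.subst g := by
  ext n
  rw [coeff_subst' (HasSubst.of_constantCoeff_zero' hg), comp, coeff_mk,
    finsum_eq_sum_of_support_subset (s := Finset.range (n + 1))]
  · rfl
  · refine Function.support_subset_iff'.mpr fun d hd => ?_
    rw [Finset.coe_range, Set.mem_Iio, not_lt] at hd
    rw [smul_eq_mul, coeff_pow_eq_zero_of_lt hg (by omega), mul_zero]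

theorem comp_X : comp X g = g := by
  rw [comp_eq_subst hg, subst_X (HasSubst.of_constantCoeff_zero' hg)]

theorem comp_neg_X : comp (-X) g = -g := by
  have hg' := HasSubst.of_constantCoeff_zero' hg
  rw [comp_eq_subst hg, ← coe_substAlgHom hg', map_neg, coe_substAlgHom, subst_X hg']

theorem comp_X_mul_sq (u : ℚ⟦X⟧) : comp (X * u ^ 2) g = g * comp u g ^ 2 := by
  have hg' := HasSubst.of_constantCoeff_zero' hg
  rw [comp_eq_subst hg, comp_eq_subst hg, subst_mul hg', subst_pow hg', subst_X hg']

theorem comp_eq_one_add_mul_add_mul_sq {p u a : ℚ⟦X⟧}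
    (hu : u = 1 + p * u + p * u ^ 2) (hpg : comp p g = a) :
    comp u g = 1 + a * comp u g + a * comp u g ^ 2 := by
  simp only [← hpg, comp_eq_subst hg, ← coe_substAlgHom (HasSubst.of_constantCoeff_zero' hg)]
  conv_lhs => rw [hu]
  simp only [map_add, map_one, map_mul, map_pow]

end Composition

/-- For the large Schröder generating function `r = 1 + z·r + z·r²`, the
Riordan array `(r, z·r²)` is a pseudo-involution: `z·r²` is
pseudo-involutory and `r ∘ (-z·r²) = 1/r`. -/
theorem schroeder_pseudo_involution (r : PowerSeries ℚ)
    (hr : r = 1 + X * r + X * r ^ 2) :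
    PseudoInvolutory (X * r ^ 2) ∧ comp r (-(X * r ^ 2)) = r⁻¹ := by
  have hr0 : constantCoeff r = 1 := by simpa using congrArg constantCoeff hr
  set s := comp r (-X) with hs_def
  have hs : s = 1 + -X * s + -X * s ^ 2 :=
    comp_eq_one_add_mul_add_mul_sq (by simp) hr (comp_X (by simp))
  have hs0 : constantCoeff s = 1 := by simpa [hr0] using congrArg constantCoeff hs
  have hrinv : r * r⁻¹ = 1 := PowerSeries.mul_inv_cancel r (by simp [hr0])
  have hsinv : s * s⁻¹ = 1 := PowerSeries.mul_inv_cancel s (by simp [hs0])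
  have hXr : constantCoeff (X * r ^ 2) = 0 := by simp
  have hXs : constantCoeff (X * s ^ 2) = 0 := by simp
  have hnegXr : constantCoeff (-(X * r ^ 2)) = 0 := by simp [hXr]
  have hr_inv : r⁻¹ = 1 + -(X * r ^ 2) * r⁻¹ + -(X * r ^ 2) * r⁻¹ ^ 2 :=
    eq_one_add_mul_add_mul_sq_of_mul_eq_one hr hrinv
  have hr_comp : comp r (-(X * r ^ 2)) = r⁻¹ := eq_of_eq_one_add_mul_add_mul_sq hnegXr
    (comp_eq_one_add_mul_add_mul_sq hnegXr hr (comp_X hnegXr)) hr_inv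
  have hs_comp : comp s (X * r ^ 2) = r⁻¹ := eq_of_eq_one_add_mul_add_mul_sq hnegXr
    (comp_eq_one_add_mul_add_mul_sq hXr hs (comp_neg_X hXr)) hr_inv
  have hr_comp_Xs : comp r (X * s ^ 2) = s⁻¹ := eq_of_eq_one_add_mul_add_mul_sq hXs
    (comp_eq_one_add_mul_add_mul_sq hXs hr (comp_X hXs))
    (by simpa using eq_one_add_mul_add_mul_sq_of_mul_eq_one hs hsinv)
  have hneg : -comp (X * r ^ 2) (-X) = X * s ^ 2 := by
    rw [comp_X_mul_sq (by simp), ← hs_def]; ring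
  refine ⟨⟨?_, ?_⟩, hr_comp⟩
  · rw [hneg, comp_X_mul_sq hXs, hr_comp_Xs]
    linear_combination X * (s * s⁻¹ + 1) * hsinv
  · rw [hneg, comp_X_mul_sq hXr, hs_comp]
    linear_combination X * (r * r⁻¹ + 1) * hrinv
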